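/- arXiv:1308.2115 — 2 statements merged into one kernel-verified Lean document; each statement's English description precedes it below -/
import Mathlib

section
/- For all n ≥ 0 and integers r, k, A_n^{(r,k)}(x) = Σ_{j=0}^n [ Σ_{l=0}^{n-j} Σ_{a=0}^{n-l-j} (-1)^j · C(n, l+j) · C(n-l-j, a) · S₁(l+j, j) · B_a^{(a-r+1)}(1) · C_{n-j-l-a}^{(k)} ] · x^j, where B_a^{(α)}(x) are the Bernoulli polynomials of order α and C_m^{(k)} are the poly-Cauchy numbers of the first kind. -/
/-!
The substitution `t = e^s - 1` turns `t / log(1+t)` into `(e^s - 1) / s`, and Lagrange's change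
of variables in the residue `[t^a] F(t) = Res F(t) / t^(a+1)` gives
`[t^a] (t / log(1+t))^r = [s^a] (s / (e^s - 1))^(a+1-r) e^s = B_a^{(a-r+1)}(1) / a!`.
Multiplying this exponential generating function by that of the poly-Cauchy numbers and by
`(1+t)^(-x) = ∑ (-1)^i ⟨x⟩_i t^i / i!`, and expanding `(-1)^i ⟨x⟩_i = (-x)_i` with Stirling
numbers of the first kind, gives the formula after exchanging the sums over `i ≥ j` and `j`.
-/

open Finset
open scoped Nat

theorem Finset.sum_range_succ_sum_range_succ_comm {M : Type*} [AddCommMonoid M]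
    (f : ℕ → ℕ → M) (n : ℕ) :
    ∑ i ∈ range (n + 1), ∑ j ∈ range (i + 1), f i j =
      ∑ j ∈ range (n + 1), ∑ l ∈ range (n - j + 1), f (l + j) j := by
  have h := sum_range_diag_flip (n + 1) fun j l => f (l + j) j
  refine (sum_congr rfl fun i _ => sum_congr rfl fun j hj => ?_).trans
    (h.trans (sum_congr rfl fun j hj => ?_))
  · rw [Nat.sub_add_cancel (Nat.lt_succ_iff.mp (mem_range.mp hj))]
  · rw [Nat.sub_add_comm (Nat.lt_succ_iff.mp (mem_range.mp hj))]

section Pochhammer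

open Polynomial

variable {R : Type*} [CommRing R]

variable (R) in
theorem descPochhammer_comp_neg_X (n : ℕ) :
    (descPochhammer R n).comp (-X) = (-1) ^ n * ascPochhammer R n := by
  induction n with
  | zero => simp
  | succ n ih =>
    rw [descPochhammer_succ_right, mul_comp, ih, ascPochhammer_succ_right, sub_comp, X_comp,
      natCast_comp]
    ring

theorem neg_one_pow_smul_ascPochhammer_eq_sum {n : ℕ} {s : ℕ → R}
    (h : descPochhammer R n = ∑ l ∈ range (n + 1), C (s l) * X ^ l) :
    (-1 : R) ^ n • ascPochhammer R n = ∑ l ∈ range (n + 1), C ((-1) ^ l * s l) * X ^ l := by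
  have hcomp := descPochhammer_comp_neg_X R n
  rw [h, Polynomial.sum_comp] at hcomp
  rw [smul_eq_C_mul, C_pow, C_neg, C_1, ← hcomp]
  refine sum_congr rfl fun l _ => ?_
  rw [mul_comp, C_comp, X_pow_comp, C_mul, C_pow, C_neg, C_1, neg_pow (X : R[X])]
  ring

end Pochhammer

namespace PowerSeries

theorem derivative_mul_X {R : Type*} [CommSemiring R] (f : R⟦X⟧) :
    d⁄dX R (f * X) = f + X * d⁄dX R f := by
  rw [Derivation.leibniz, derivative_X, smul_eq_mul, smul_eq_mul, mul_one, add_comm]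

section Subst

variable {R : Type*} [CommRing R] {g : R⟦X⟧}

theorem coeff_subst_eq_sum_range (hg : constantCoeff g = 0) (F : R⟦X⟧) {i a : ℕ}
    (hia : i ≤ a) :
    coeff i (F.subst g) = ∑ m ∈ range (a + 1), coeff m F * coeff i (g ^ m) := by
  rw [coeff_subst' (HasSubst.of_constantCoeff_zero' hg)]
  refine finsum_eq_sum_of_support_subset _ fun m hm => ?_
  by_contra hma
  have hXm : (X : R⟦X⟧) ^ m ∣ g ^ m := pow_dvd_pow_of_dvd (X_dvd_iff.mpr hg) m
  simp only [coe_range, Set.mem_Iio, not_lt] at hma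
  exact hm (by simp only [X_pow_dvd_iff.mp hXm i (by omega), smul_zero])

theorem coeff_subst_mul (hg : constantCoeff g = 0) (F H : R⟦X⟧) (a : ℕ) :
    coeff a (F.subst g * H) = ∑ m ∈ range (a + 1), coeff m F * coeff a (g ^ m * H) := by
  simp_rw [coeff_mul, mul_sum]
  rw [sum_comm]
  refine sum_congr rfl fun p hp => ?_
  rw [coeff_subst_eq_sum_range hg F (HasAntidiagonal.antidiagonal.fst_le hp), sum_mul]
  exact sum_congr rfl fun m _ => mul_assoc _ _ _

end Subst

variable {K : Type*} [Field K] [CharZero K]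

section Lagrange

variable (U : K⟦X⟧ˣ)

/-- With `φ = U X`, this is `Res φ' / φ^(e+2) = 0`: the integrand is the derivative of
`-φ^(-(e+1)) / (e+1)`. -/
theorem coeff_succ_inv_pow_mul_derivative_eq_zero (e : ℕ) :
    coeff (e + 1) ((↑U⁻¹ : K⟦X⟧) ^ (e + 2) * d⁄dX K ((U : K⟦X⟧) * X)) = 0 := by
  set V : K⟦X⟧ := ↑U⁻¹
  have hVU : V * U = 1 := U.inv_mul
  have hderiv : d⁄dX K (V ^ (e + 1)) = -(C ((e : K) + 1) * (V ^ (e + 2) * d⁄dX K U)) := by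
    rw [derivative_pow, derivative_inv, map_add, map_natCast, map_one]
    push_cast
    ring
  have hsplit : V ^ (e + 2) * d⁄dX K ((U : K⟦X⟧) * X) =
      V ^ (e + 1) + X * (V ^ (e + 2) * d⁄dX K U) := by
    rw [derivative_mul_X]
    linear_combination V ^ (e + 1) * hVU
  have hcoeff := congrArg (coeff e) hderiv
  rw [coeff_derivative, map_neg, coeff_C_mul] at hcoeff
  rw [hsplit, map_add, coeff_succ_X_mul]
  refine (mul_eq_zero.mp ?_).resolve_left (Nat.cast_add_one_ne_zero e)
  linear_combination hcoeff

omit [CharZero K] in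
theorem constantCoeff_inv_mul_derivative :
    constantCoeff ((↑U⁻¹ : K⟦X⟧) * d⁄dX K ((U : K⟦X⟧) * X)) = 1 := by
  have hsplit : (↑U⁻¹ : K⟦X⟧) * d⁄dX K ((U : K⟦X⟧) * X) =
      1 + X * ((↑U⁻¹ : K⟦X⟧) * d⁄dX K U) := by
    rw [derivative_mul_X]
    linear_combination U.inv_mul
  rw [hsplit, map_add, map_mul, constantCoeff_X, zero_mul, add_zero, map_one]

theorem coeff_pow_mul_inv_pow_mul_derivative {m a : ℕ} (hma : m ≤ a) :
    coeff a (((U : K⟦X⟧) * X) ^ m * ((↑U⁻¹ : K⟦X⟧) ^ (a + 1) * d⁄dX K ((U : K⟦X⟧) * X))) =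
      if m = a then 1 else 0 := by
  obtain ⟨d, rfl⟩ := Nat.exists_eq_add_of_le hma
  have hcancel : ((U : K⟦X⟧) * X) ^ m * (↑U⁻¹ : K⟦X⟧) ^ (m + d + 1) =
      X ^ m * (↑U⁻¹ : K⟦X⟧) ^ (d + 1) := by
    have hUV : (U : K⟦X⟧) ^ m * (↑U⁻¹ : K⟦X⟧) ^ m = 1 := by rw [← mul_pow, U.mul_inv, one_pow]
    linear_combination X ^ m * (↑U⁻¹ : K⟦X⟧) ^ (d + 1) * hUV
  rw [← mul_assoc, hcancel, mul_assoc, add_comm m d, coeff_X_pow_mul]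
  rcases d with _ | e
  · simpa [coeff_zero_eq_constantCoeff_apply] using constantCoeff_inv_mul_derivative U
  · simpa using coeff_succ_inv_pow_mul_derivative_eq_zero U e

/-- Lagrange's change of variables `t = U(s) s` in `[t^a] F(t) = Res F(t) / t^(a+1)`. -/
theorem coeff_eq_coeff_subst_mul (F : K⟦X⟧) (a : ℕ) :
    coeff a F = coeff a (F.subst ((U : K⟦X⟧) * X) *
      ((↑U⁻¹ : K⟦X⟧) ^ (a + 1) * d⁄dX K ((U : K⟦X⟧) * X))) := by
  rw [coeff_subst_mul (by simp), sum_eq_single a]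
  · rw [coeff_pow_mul_inv_pow_mul_derivative U le_rfl, if_pos rfl, mul_one]
  · intro m hm hma
    rw [coeff_pow_mul_inv_pow_mul_derivative U (by simpa [Nat.lt_succ_iff] using hm),
      if_neg hma, mul_zero]
  · simp

end Lagrange

section LogExp

theorem one_add_X_mul_derivative_log : (1 + X) * d⁄dX K (log K) = 1 := by
  ext n
  rw [deriv_log]
  rcases n with _ | n
  · simp
  · simp [add_mul, coeff_succ_X_mul, pow_succ]

theorem log_subst_exp_sub_one : (log K).subst (exp K - 1) = X := by
  have hg : HasSubst (exp K - 1) := HasSubst.exp_sub_one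
  have hinv : (d⁄dX K (log K)).subst (exp K - 1) * exp K = 1 := by
    have h := congrArg (substAlgHom (R := K) hg) (one_add_X_mul_derivative_log (K := K))
    rw [map_mul, map_add, map_one, substAlgHom_X, add_sub_cancel, coe_substAlgHom] at h
    rw [mul_comm]
    exact h
  apply derivative.ext
  · rw [derivative_subst hg, map_sub, derivative_exp, derivative_one, sub_zero, hinv,
      derivative_X]
  · rw [constantCoeff_X]
    exact constantCoeff_subst_eq_zero (sub_eq_zero.mpr constantCoeff_exp) _ constantCoeff_log

theorem mul_exp_eq_mk_eval_one (P : K⟦X⟧) (b : ℕ → Polynomial K)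
    (h : map (Polynomial.C : K →+* Polynomial K) P *
        mk (fun n => (n ! : K)⁻¹ • (Polynomial.X : Polynomial K) ^ n) =
      mk (fun n => (n ! : K)⁻¹ • b n)) :
    P * exp K = mk (fun n => (n ! : K)⁻¹ * (b n).eval 1) := by
  ext n
  have h' := congrArg (Polynomial.eval 1 ∘ coeff n) h
  simp only [Function.comp_apply, coeff_mul, coeff_map, coeff_mk, Polynomial.eval_finsetSum,
    Polynomial.eval_mul, Polynomial.eval_C, Polynomial.eval_smul, Polynomial.eval_pow,
    Polynomial.eval_X, one_pow, smul_eq_mul, mul_one] at h'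
  rw [coeff_mk, ← h', coeff_mul]
  simp [coeff_exp]

variable {W U : K⟦X⟧ˣ} (hW : (W : K⟦X⟧) * X = log K) (hU : (U : K⟦X⟧) * X = exp K - 1)
include hW hU

theorem subst_exp_sub_one_of_mul_X_eq_log : (W : K⟦X⟧).subst (exp K - 1) = ↑U⁻¹ := by
  have hg : HasSubst (exp K - 1) := HasSubst.exp_sub_one
  set F : K⟦X⟧ := (W : K⟦X⟧).subst (exp K - 1)
  refine (Units.inv_eq_of_mul_eq_one_left (mul_right_cancel₀ X_ne_zero ?_)).symm
  calc F * (U : K⟦X⟧) * X = F * (exp K - 1) := by rw [mul_assoc, hU]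
    _ = subst (exp K - 1) ((W : K⟦X⟧) * X : K⟦X⟧) := by rw [subst_mul hg, subst_X hg]
    _ = 1 * X := by rw [hW, log_subst_exp_sub_one, one_mul]

theorem zpow_subst_exp_sub_one_of_mul_X_eq_log (n : ℤ) :
    (↑(W ^ n) : K⟦X⟧).subst (exp K - 1) = ↑(U ^ (-n)) := by
  set σ : K⟦X⟧ →* K⟦X⟧ := (substAlgHom (R := K) HasSubst.exp_sub_one).toMonoidHom
  have hσ : ∀ f, σ f = f.subst (exp K - 1) := fun f => by
    simp [σ, coe_substAlgHom]
  have hWU : Units.map σ W = U⁻¹ := Units.ext (by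
    rw [Units.coe_map, hσ, subst_exp_sub_one_of_mul_X_eq_log hW hU])
  rw [← hσ, ← Units.coe_map, map_zpow, hWU, inv_zpow', zpow_neg]

theorem coeff_zpow_eq_coeff_zpow_mul_exp (r : ℤ) (a : ℕ) :
    coeff a ((W ^ (-r) : K⟦X⟧ˣ) : K⟦X⟧) =
      coeff a (((U ^ (r - a - 1) : K⟦X⟧ˣ) : K⟦X⟧) * exp K) := by
  rw [coeff_eq_coeff_subst_mul U, hU, zpow_subst_exp_sub_one_of_mul_X_eq_log hW hU, neg_neg,
    map_sub, derivative_exp, derivative_one, sub_zero, ← mul_assoc]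
  congr 3
  rw [← Units.val_pow_eq_pow_val, ← Units.val_mul, inv_pow, ← zpow_natCast, ← zpow_neg,
    ← zpow_add]
  congr 2
  push_cast
  ring

theorem coe_zpow_neg_eq_mk_eval_one {B : ℤ → ℕ → Polynomial K}
    (hB : ∀ α : ℤ, map (Polynomial.C : K →+* Polynomial K) ((U ^ (-α) : K⟦X⟧ˣ) : K⟦X⟧) *
        mk (fun n => (n ! : K)⁻¹ • (Polynomial.X : Polynomial K) ^ n) =
      mk (fun n => (n ! : K)⁻¹ • B α n)) (r : ℤ) :
    ((W ^ (-r) : K⟦X⟧ˣ) : K⟦X⟧) =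
      mk fun a => (a ! : K)⁻¹ * (B ((a : ℤ) - r + 1) a).eval 1 := by
  ext a
  rw [coeff_zpow_eq_coeff_zpow_mul_exp hW hU, show r - a - 1 = -((a : ℤ) - r + 1) by ring,
    mul_exp_eq_mk_eval_one _ _ (hB _), coeff_mk, coeff_mk]

end LogExp

section ExponentialGeneratingFunction

theorem coeff_mk_factorial_smul_mul {R : Type*} [CommRing R] [Algebra K R] (a b : ℕ → R)
    (n : ℕ) :
    coeff n (mk (fun i => (i ! : K)⁻¹ • a i) * mk (fun i => (i ! : K)⁻¹ • b i)) =
      (n ! : K)⁻¹ • ∑ i ∈ range (n + 1), n.choose i • (a i * b (n - i)) := by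
  rw [coeff_mul, Nat.sum_antidiagonal_eq_sum_range_succ_mk, smul_sum]
  refine sum_congr rfl fun i hi => ?_
  have hin : i ≤ n := Nat.lt_succ_iff.mp (mem_range.mp hi)
  rw [coeff_mk, coeff_mk, smul_mul_smul_comm, ← Nat.cast_smul_eq_nsmul K, smul_smul]
  congr 1
  have hn : (n ! : K) ≠ 0 := Nat.cast_ne_zero.mpr n.factorial_ne_zero
  have hni : ((n - i)! : K) ≠ 0 := Nat.cast_ne_zero.mpr (n - i).factorial_ne_zero
  rw [Nat.cast_choose K hin]
  field_simp

theorem eq_sum_of_map_C_mul_mk_ascPochhammer {c : ℕ → K} {a : ℕ → Polynomial K}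
    {s : ℕ → ℕ → K}
    (hs : ∀ i, descPochhammer K i = ∑ l ∈ range (i + 1), Polynomial.C (s i l) * Polynomial.X ^ l)
    (h : map (Polynomial.C : K →+* Polynomial K) (mk fun p => (p ! : K)⁻¹ • c p) *
        mk (fun i => ((-1 : K) ^ i / i !) • ascPochhammer K i) = mk fun i => (i ! : K)⁻¹ • a i)
    (n : ℕ) :
    a n = ∑ i ∈ range (n + 1), ∑ j ∈ range (i + 1),
      Polynomial.C ((-1) ^ j * n.choose i * s i j * c (n - i)) * Polynomial.X ^ j := by
  have hasc : (mk fun i => ((-1 : K) ^ i / i !) • ascPochhammer K i) =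
      mk fun i => (i ! : K)⁻¹ • ((-1 : K) ^ i • ascPochhammer K i) := by
    ext i
    rw [coeff_mk, coeff_mk, smul_smul, div_eq_inv_mul]
  have hmap : map (Polynomial.C : K →+* Polynomial K) (mk fun p => (p ! : K)⁻¹ • c p) =
      mk fun p => (p ! : K)⁻¹ • Polynomial.C (c p) := by
    ext p
    rw [coeff_map, coeff_mk, coeff_mk, Polynomial.smul_C]
  have hn := congrArg (coeff n) h
  rw [hmap, hasc, mul_comm, coeff_mk_factorial_smul_mul, coeff_mk] at hn
  rw [← smul_right_injective _ (inv_ne_zero (Nat.cast_ne_zero.mpr n.factorial_ne_zero)) hn]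
  refine sum_congr rfl fun i _ => ?_
  rw [neg_one_pow_smul_ascPochhammer_eq_sum (hs i), sum_mul, smul_sum]
  refine sum_congr rfl fun j _ => ?_
  simp only [nsmul_eq_mul, Polynomial.C_mul, map_natCast]
  ring

end ExponentialGeneratingFunction

end PowerSeries

open PowerSeries

theorem cauchy_stmt7_general
    (r k : ℤ)
    (L : PowerSeries ℚ)
    (hL : ∀ n : ℕ, PowerSeries.coeff n L = if n = 0 then 0 else (-1 : ℚ) ^ (n - 1) / n)
    (Lu : (PowerSeries ℚ)ˣ)
    (hLu : (Lu : PowerSeries ℚ) * PowerSeries.X = L)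
    (G : ℤ → PowerSeries ℚ)
    (A : ℤ → ℤ → ℕ → Polynomial ℚ)
    (hA : ∀ ρ κ : ℤ, PowerSeries.map (Polynomial.C : ℚ →+* Polynomial ℚ)
        (((Lu ^ (-ρ) : (PowerSeries ℚ)ˣ) : PowerSeries ℚ) * G κ) *
        PowerSeries.mk (fun n => ((-1 : ℚ) ^ n / n.factorial) • ascPochhammer ℚ n) =
      PowerSeries.mk (fun n => ((n.factorial : ℚ)⁻¹) • A ρ κ n))
    (S1 : ℕ → ℕ → ℚ)
    (hS1 : ∀ n : ℕ, descPochhammer ℚ n =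
      ∑ l ∈ Finset.range (n + 1), Polynomial.C (S1 n l) * Polynomial.X ^ l)
    (Eu : (PowerSeries ℚ)ˣ)
    (hEu : (Eu : PowerSeries ℚ) * PowerSeries.X = PowerSeries.exp ℚ - 1)
    (B : ℤ → ℕ → Polynomial ℚ)
    (hB : ∀ α : ℤ, PowerSeries.map (Polynomial.C : ℚ →+* Polynomial ℚ)
        ((Eu ^ (-α) : (PowerSeries ℚ)ˣ) : PowerSeries ℚ) *
        PowerSeries.mk (fun n => ((n.factorial : ℚ)⁻¹) • (Polynomial.X : Polynomial ℚ) ^ n) =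
      PowerSeries.mk (fun n => ((n.factorial : ℚ)⁻¹) • B α n))
    (Cp : ℕ → ℚ)
    (hCp : ∀ m : ℕ, PowerSeries.coeff m (G k) = Cp m / m.factorial) :
    ∀ n : ℕ, A r k n = ∑ j ∈ Finset.range (n + 1),
      Polynomial.C (∑ l ∈ Finset.range (n - j + 1), ∑ a ∈ Finset.range (n - l - j + 1),
        (-1 : ℚ) ^ j * (n.choose (l + j) : ℚ) * ((n - l - j).choose a : ℚ) *
          S1 (l + j) j * (B ((a : ℤ) - r + 1) a).eval 1 * Cp (n - j - l - a)) *
        Polynomial.X ^ j := by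
  intro n
  set c : ℕ → ℚ := fun p => ∑ a ∈ range (p + 1),
    p.choose a • ((B ((a : ℤ) - r + 1) a).eval 1 * Cp (p - a))
  have hlog : L = log ℚ := by
    ext m
    rw [hL, coeff_log]
    rcases m with _ | m
    · simp
    · simp [pow_succ]
  have hGk : G k = mk fun m => (m ! : ℚ)⁻¹ • Cp m := by
    ext m
    rw [hCp, coeff_mk, smul_eq_mul, div_eq_inv_mul]
  have hprod : ((Lu ^ (-r) : (PowerSeries ℚ)ˣ) : PowerSeries ℚ) * G k =
      mk fun p => (p ! : ℚ)⁻¹ • c p := by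
    rw [coe_zpow_neg_eq_mk_eval_one (hlog ▸ hLu) hEu hB, hGk]
    ext p
    rw [coeff_mk]
    exact coeff_mk_factorial_smul_mul (K := ℚ) _ _ p
  have hEGF := hA r k
  rw [hprod] at hEGF
  rw [eq_sum_of_map_C_mul_mk_ascPochhammer hS1 hEGF, sum_range_succ_sum_range_succ_comm]
  refine sum_congr rfl fun j _ => ?_
  rw [← sum_mul, ← map_sum]
  congr 2
  refine sum_congr rfl fun l _ => ?_
  simp only [c, ← Nat.sub_sub, mul_sum, Nat.sub_right_comm n j l]
  refine sum_congr rfl fun a _ => ?_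
  rw [nsmul_eq_mul]
  ring

/-- for all `n ≥ 0` and integers `r, k`,
`Aₙ^{(r,k)}(x) = Σ_{j=0}^n [Σ_{l=0}^{n-j} Σ_{a=0}^{n-l-j} (-1)^j C(n,l+j)
 C(n-l-j,a) S₁(l+j,j) B_a^{(a-r+1)}(1) C_{n-j-l-a}^{(k)}] x^j`,
where `B` are higher-order Bernoulli polynomials and `Cp m` are the poly-Cauchy numbers of
the first kind, i.e. `Lif_k(log(1+t)) = Σ_m Cp m · tᵐ/m!`. -/
theorem cauchy_stmt7
    (r k : ℤ)
    (L : PowerSeries ℚ)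
    (hL : ∀ n : ℕ, PowerSeries.coeff n L = if n = 0 then 0 else (-1 : ℚ) ^ (n - 1) / n)
    (Lu : (PowerSeries ℚ)ˣ)
    (hLu : (Lu : PowerSeries ℚ) * PowerSeries.X = L)
    (G : ℤ → PowerSeries ℚ)
    (hG : ∀ (j : ℤ) (n : ℕ), PowerSeries.coeff n (G j) =
      ∑ m ∈ Finset.range (n + 1),
        ((m.factorial : ℚ) * ((m : ℚ) + 1) ^ j)⁻¹ * PowerSeries.coeff n (L ^ m))
    (A : ℤ → ℤ → ℕ → Polynomial ℚ)
    (hA : ∀ ρ κ : ℤ, PowerSeries.map (Polynomial.C : ℚ →+* Polynomial ℚ)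
        (((Lu ^ (-ρ) : (PowerSeries ℚ)ˣ) : PowerSeries ℚ) * G κ) *
        PowerSeries.mk (fun n => ((-1 : ℚ) ^ n / n.factorial) • ascPochhammer ℚ n) =
      PowerSeries.mk (fun n => ((n.factorial : ℚ)⁻¹) • A ρ κ n))
    (S1 : ℕ → ℕ → ℚ)
    (hS1 : ∀ n : ℕ, descPochhammer ℚ n =
      ∑ l ∈ Finset.range (n + 1), Polynomial.C (S1 n l) * Polynomial.X ^ l)
    (hS1zero : ∀ n l : ℕ, n < l → S1 n l = 0)
    (Eu : (PowerSeries ℚ)ˣ)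
    (hEu : (Eu : PowerSeries ℚ) * PowerSeries.X = PowerSeries.exp ℚ - 1)
    (B : ℤ → ℕ → Polynomial ℚ)
    (hB : ∀ α : ℤ, PowerSeries.map (Polynomial.C : ℚ →+* Polynomial ℚ)
        ((Eu ^ (-α) : (PowerSeries ℚ)ˣ) : PowerSeries ℚ) *
        PowerSeries.mk (fun n => ((n.factorial : ℚ)⁻¹) • (Polynomial.X : Polynomial ℚ) ^ n) =
      PowerSeries.mk (fun n => ((n.factorial : ℚ)⁻¹) • B α n))
    (Cp : ℕ → ℚ)
    (hCp : ∀ m : ℕ, PowerSeries.coeff m (G k) = Cp m / m.factorial) :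
    ∀ n : ℕ, A r k n = ∑ j ∈ Finset.range (n + 1),
      Polynomial.C (∑ l ∈ Finset.range (n - j + 1), ∑ a ∈ Finset.range (n - l - j + 1),
        (-1 : ℚ) ^ j * (n.choose (l + j) : ℚ) * ((n - l - j).choose a : ℚ) *
          S1 (l + j) j * (B ((a : ℤ) - r + 1) a).eval 1 * Cp (n - j - l - a)) *
        Polynomial.X ^ j :=
  cauchy_stmt7_general r k L hL Lu hLu G A hA S1 hS1 Eu hEu B hB Cp hCp
end

section
/- For integers r ≥ 0, k and n ≥ 0, the number A_n^{(r,k)} := A_n^{(r,k)}(0) equals Σ_{m=0}^n Σ_{l=0}^m (C(m,l)/(C(m-l+r,r)·(l+1)^k)) · S₁(n,m) · S₂(m-l+r, r). -/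
/-!
Write `L = log(1 + t)`. From `(1 + t) L' = 1` one gets `n! [tⁿ] Lᵐ = m! s(n, m)`, with `s(n, m)`
the coefficients of the falling factorial `(x)ₙ`; so substituting `L` into a series `P` gives
`n! [tⁿ] P(L) = ∑ₘ m! [Xᵐ] P · s(n, m)`. Both factors of the generating function are such
substitutions: `Lif_k(L)` by definition, and `(t / L)ʳ = E_r(L)` with `E_r = ((e^X - 1) / X)ʳ`,
because `(Xʳ E_r)(L)` has `n`-th coefficient `r! / n! · ∑ₘ s(n, m) S₂(m, r) = δ_{n r}`: the two
Stirling matrices are inverse to each other, as `Xⁱ = ∑ⱼ S₂(i, j) (X)ⱼ` and the falling factorials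
are linearly independent. The Cauchy product of `E_r` and `Lif_k` then yields the double sum, and
`(1 + t)^{-x}` contributes nothing at `x = 0`.
-/

open Finset

section Stirling

open Polynomial

theorem eq_stirlingSecond_of_rec (S : ℕ → ℕ → ℕ) (h00 : S 0 0 = 1)
    (hsucc0 : ∀ n, S (n + 1) 0 = 0) (h0succ : ∀ k, S 0 (k + 1) = 0)
    (hrec : ∀ n k, S (n + 1) (k + 1) = (k + 1) * S n (k + 1) + S n k) :
    S = Nat.stirlingSecond := by
  funext n k
  induction n generalizing k with
  | zero => cases k <;> simp [h00, h0succ, Nat.stirlingSecond_zero, Nat.stirlingSecond_zero_succ]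
  | succ n ih =>
    cases k with
    | zero => simp [hsucc0, Nat.stirlingSecond_succ_zero]
    | succ k => rw [hrec, ih, ih, Nat.stirlingSecond_succ_succ]

theorem X_pow_eq_sum_stirlingSecond_mul_descPochhammer (R : Type*) [CommRing R] (n : ℕ) :
    (X : R[X]) ^ n =
      ∑ k ∈ range (n + 1), (Nat.stirlingSecond n k : R[X]) * descPochhammer R k := by
  induction n with
  | zero => simp
  | succ n ih =>
    have hX (k : ℕ) :
        X * descPochhammer R k = descPochhammer R (k + 1) + (k : R[X]) * descPochhammer R k := by
      rw [descPochhammer_succ_right]; ring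
    have hshift : ∑ k ∈ range (n + 1), (k * Nat.stirlingSecond n k : R[X]) * descPochhammer R k =
        ∑ k ∈ range (n + 1),
          ((k + 1) * Nat.stirlingSecond n (k + 1) : R[X]) * descPochhammer R (k + 1) := by
      rw [sum_range_succ', sum_range_succ, Nat.stirlingSecond_eq_zero_of_lt (Nat.lt_succ_self n)]
      simp
    calc (X : R[X]) ^ (n + 1)
        = ∑ k ∈ range (n + 1), (Nat.stirlingSecond n k : R[X]) * (X * descPochhammer R k) := by
          rw [pow_succ', ih, mul_sum]; exact sum_congr rfl fun k _ => by ring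
      _ = ∑ k ∈ range (n + 1), (Nat.stirlingSecond n k : R[X]) * descPochhammer R (k + 1) +
          ∑ k ∈ range (n + 1), (k * Nat.stirlingSecond n k : R[X]) * descPochhammer R k := by
          rw [← sum_add_distrib]; exact sum_congr rfl fun k _ => by rw [hX]; ring
      _ = _ := by
          rw [hshift, ← sum_add_distrib, sum_range_succ' _ (n + 1), Nat.stirlingSecond_succ_zero]
          simp only [Nat.stirlingSecond_succ_succ]
          push_cast
          simp only [zero_mul, add_zero]
          exact sum_congr rfl fun k _ => by ring

theorem linearIndependent_descPochhammer (R : Type*) [CommRing R] [IsDomain R] :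
    LinearIndependent R (descPochhammer R) :=
  Sequence.linearIndependent ⟨descPochhammer R, fun n => by
    rw [degree_eq_natDegree (monic_descPochhammer R n).ne_zero, descPochhammer_natDegree]⟩

theorem sum_coeff_descPochhammer_mul_stirlingSecond (R : Type*) [CommRing R] [IsDomain R]
    (n j : ℕ) :
    ∑ i ∈ range (n + 1), (descPochhammer R n).coeff i * Nat.stirlingSecond i j =
      if n = j then 1 else 0 := by
  rcases lt_or_ge n j with hnj | hjn
  · rw [if_neg hnj.ne]
    refine sum_eq_zero fun i hi => ?_
    rw [Nat.stirlingSecond_eq_zero_of_lt (by simp at hi; omega), Nat.cast_zero, mul_zero]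
  set c : ℕ → R := fun j =>
    ∑ i ∈ range (n + 1), (descPochhammer R n).coeff i * Nat.stirlingSecond i j
  have hexpand : descPochhammer R n = ∑ j ∈ range (n + 1), c j • descPochhammer R j := by
    have hX (i : ℕ) (hi : i ∈ range (n + 1)) : (X : R[X]) ^ i =
        ∑ j ∈ range (n + 1), (Nat.stirlingSecond i j : R[X]) * descPochhammer R j := by
      rw [X_pow_eq_sum_stirlingSecond_mul_descPochhammer]
      refine sum_subset (range_subset_range.mpr (by simp at hi; omega)) fun j _ hj => ?_
      rw [Nat.stirlingSecond_eq_zero_of_lt (by simpa using hj), Nat.cast_zero, zero_mul]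
    conv_lhs => rw [as_sum_range_C_mul_X_pow' (descPochhammer R n) (n := n + 1) (by simp)]
    rw [sum_congr rfl fun i hi => by rw [hX i hi, mul_sum], sum_comm]
    refine sum_congr rfl fun j _ => ?_
    simp only [c, smul_eq_C_mul, map_sum, sum_mul, map_mul, map_natCast, mul_assoc]
  have hδ : descPochhammer R n =
      ∑ j ∈ range (n + 1), (if n = j then (1 : R) else 0) • descPochhammer R j := by
    simp
  have hzero : ∑ j ∈ range (n + 1), (c j - if n = j then 1 else 0) • descPochhammer R j = 0 := by
    simp only [sub_smul, sum_sub_distrib, ← hexpand, ← hδ, sub_self]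
  exact sub_eq_zero.mp <|
    linearIndependent_iff'.mp (linearIndependent_descPochhammer R) _ _ hzero j (by simp; omega)

theorem eq_coeff_descPochhammer_of_expansion {R : Type*} [Ring R] {S : ℕ → ℕ → R}
    (hS : ∀ n, descPochhammer R n = ∑ l ∈ range (n + 1), C (S n l) * X ^ l)
    (hS_zero : ∀ n l, n < l → S n l = 0) (n m : ℕ) :
    S n m = (descPochhammer R n).coeff m := by
  rw [hS n, finsetSum_coeff]
  simp only [coeff_C_mul_X_pow]
  rw [sum_ite_eq]
  split_ifs with hm
  · rfl
  · exact hS_zero n m (by simpa using hm)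

end Stirling

section LogPowers

open PowerSeries

theorem one_add_X_mul_derivative_log (A : Type*) [CommRing A] [Algebra ℚ A] :
    (1 + X) * d⁄dX A (log A) = 1 := by
  ext n
  rw [deriv_log, add_mul, one_mul, map_add]
  cases n with
  | zero => simp
  | succ n => simp [coeff_succ_X_mul, pow_succ]

theorem coeff_log_pow_succ_rec (n m : ℕ) :
    (n + 1) * coeff (n + 1) (log ℚ ^ (m + 1)) + n * coeff n (log ℚ ^ (m + 1)) =
      (m + 1) * coeff n (log ℚ ^ m) := by
  have hode : (1 + X) * d⁄dX ℚ (log ℚ ^ (m + 1)) = (m + 1 : ℚ) • log ℚ ^ m := by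
    rw [Derivation.leibniz_pow, add_tsub_cancel_right, smul_eq_mul, mul_smul_comm, mul_left_comm,
      one_add_X_mul_derivative_log, mul_one, ← Nat.cast_smul_eq_nsmul ℚ, Nat.cast_succ]
  have hcoeff := congrArg (coeff n) hode
  rw [add_mul, one_mul, map_add, coeff_derivative, coeff_smul, smul_eq_mul] at hcoeff
  cases n with
  | zero => simpa [mul_comm] using hcoeff
  | succ n =>
    rw [coeff_succ_X_mul, coeff_derivative] at hcoeff
    push_cast at hcoeff ⊢
    linear_combination hcoeff

theorem factorial_mul_coeff_log_pow (n m : ℕ) :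
    (n.factorial : ℚ) * coeff n (log ℚ ^ m) = m.factorial * (descPochhammer ℚ n).coeff m := by
  induction n generalizing m with
  | zero => cases m <;> simp [coeff_zero_eq_constantCoeff, Polynomial.coeff_one]
  | succ n ih =>
    cases m with
    | zero => simp [Polynomial.coeff_zero_eq_eval_zero]
    | succ m =>
      have hdesc : (descPochhammer ℚ (n + 1)).coeff (m + 1) =
          (descPochhammer ℚ n).coeff m - n * (descPochhammer ℚ n).coeff (m + 1) := by
        rw [descPochhammer_succ_right, mul_sub, Polynomial.coeff_sub, Polynomial.coeff_mul_X,
          ← Polynomial.C_eq_natCast, Polynomial.coeff_mul_C, mul_comm]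
      have ih' := ih (m + 1)
      rw [Nat.factorial_succ] at ih'
      rw [hdesc, Nat.factorial_succ, Nat.factorial_succ]
      push_cast at ih' ⊢
      linear_combination (n.factorial : ℚ) * coeff_log_pow_succ_rec n m + (m + 1) * ih m - n * ih'

theorem coeff_log_pow_eq_zero_of_lt {n m : ℕ} (h : n < m) : coeff n (log ℚ ^ m) = 0 := by
  have := factorial_mul_coeff_log_pow n m
  rwa [Polynomial.coeff_eq_zero_of_natDegree_lt (by simpa using h), mul_zero,
    mul_eq_zero_iff_left (by positivity)] at this

end LogPowers

section SubstLog

open PowerSeries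

theorem coeff_subst_log (P : ℚ⟦X⟧) (n : ℕ) :
    coeff n (P.subst (log ℚ)) = ∑ m ∈ range (n + 1), coeff m P * coeff n (log ℚ ^ m) := by
  rw [coeff_subst' HasSubst.log]
  refine finsum_eq_sum_of_support_subset _ fun m hm => ?_
  by_contra hmn
  simp only [coe_range, Set.mem_Iio, not_lt] at hmn
  exact hm (show coeff m P • coeff n (log ℚ ^ m) = 0 by
    rw [coeff_log_pow_eq_zero_of_lt (by omega), smul_zero])

theorem factorial_mul_coeff_subst_log (P : ℚ⟦X⟧) (n : ℕ) :
    (n.factorial : ℚ) * coeff n (P.subst (log ℚ)) =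
      ∑ m ∈ range (n + 1), m.factorial * coeff m P * (descPochhammer ℚ n).coeff m := by
  rw [coeff_subst_log, mul_sum]
  refine sum_congr rfl fun m _ => ?_
  rw [mul_left_comm, factorial_mul_coeff_log_pow]
  ring

/-- The power series `((e^X - 1) / X) ^ r`, using `(e^X - 1) ^ r = r! ∑ₙ S₂(n, r) Xⁿ / n!`. -/
noncomputable def expSubOneDivXPow (r : ℕ) : ℚ⟦X⟧ :=
  mk fun j => r.factorial * Nat.stirlingSecond (j + r) r / (j + r).factorial

/-- The paper's `Lif_k`. -/
noncomputable def polylogFactorial (k : ℤ) : ℚ⟦X⟧ :=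
  mk fun m => ((m.factorial : ℚ) * (m + 1) ^ k)⁻¹

theorem factorial_mul_coeff_X_pow_mul_expSubOneDivXPow (r m : ℕ) :
    (m.factorial : ℚ) * coeff m (X ^ r * expSubOneDivXPow r) =
      r.factorial * Nat.stirlingSecond m r := by
  rw [coeff_X_pow_mul', expSubOneDivXPow, coeff_mk]
  split_ifs with hrm
  · rw [Nat.sub_add_cancel hrm]
    field_simp
  · rw [Nat.stirlingSecond_eq_zero_of_lt (by omega)]
    simp

theorem log_pow_mul_subst_log_expSubOneDivXPow (r : ℕ) :
    log ℚ ^ r * (expSubOneDivXPow r).subst (log ℚ) = X ^ r := by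
  have hlog : log ℚ ^ r = (X ^ r : ℚ⟦X⟧).subst (log ℚ) := by
    rw [subst_pow HasSubst.log, subst_X HasSubst.log]
  rw [hlog, ← subst_mul HasSubst.log]
  ext n
  have hfac : (n.factorial : ℚ) * coeff n ((X ^ r * expSubOneDivXPow r).subst (log ℚ)) =
      r.factorial * if n = r then 1 else 0 := by
    rw [factorial_mul_coeff_subst_log, ← sum_coeff_descPochhammer_mul_stirlingSecond, mul_sum]
    refine sum_congr rfl fun m _ => ?_
    rw [factorial_mul_coeff_X_pow_mul_expSubOneDivXPow]
    ring
  rw [coeff_X_pow]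
  split_ifs at hfac ⊢ with hnr
  · subst hnr
    simpa [Nat.factorial_ne_zero] using hfac
  · simpa [Nat.factorial_ne_zero] using hfac

theorem subst_log_expSubOneDivXPow {Lu : ℚ⟦X⟧ˣ} (hLu : (Lu : ℚ⟦X⟧) * X = log ℚ) (r : ℕ) :
    (expSubOneDivXPow r).subst (log ℚ) = ↑(Lu ^ (-(r : ℤ))) := by
  have h := log_pow_mul_subst_log_expSubOneDivXPow r
  have hlog : log ℚ ^ r = (↑(Lu ^ r) : ℚ⟦X⟧) * X ^ r := by
    rw [← hLu, mul_pow, Units.val_pow_eq_pow_val]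
  rw [hlog, mul_right_comm] at h
  have hunit : (↑(Lu ^ r) : ℚ⟦X⟧) * (expSubOneDivXPow r).subst (log ℚ) = 1 :=
    mul_right_cancel₀ (pow_ne_zero r (X_ne_zero (R := ℚ))) (h.trans (one_mul _).symm)
  rw [zpow_neg, zpow_natCast, Units.inv_eq_of_mul_eq_one_right hunit]

theorem factorial_mul_coeff_expSubOneDivXPow_mul_polylogFactorial (r : ℕ) (k : ℤ) (m : ℕ) :
    (m.factorial : ℚ) * coeff m (expSubOneDivXPow r * polylogFactorial k) =
      ∑ l ∈ range (m + 1), (m.choose l : ℚ) / ((m - l + r).choose r * ((l : ℚ) + 1) ^ k) *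
        Nat.stirlingSecond (m - l + r) r := by
  rw [coeff_mul, ← Nat.sum_antidiagonal_swap, Nat.sum_antidiagonal_eq_sum_range_succ_mk, mul_sum]
  refine sum_congr rfl fun l hl => ?_
  obtain ⟨a, rfl⟩ : ∃ a, m = a + l := ⟨m - l, by simp at hl; omega⟩
  simp only [Prod.swap_prod_mk, expSubOneDivXPow, polylogFactorial, coeff_mk, Nat.add_sub_cancel]
  have hl : ((a + l).factorial : ℚ) = (a + l).choose l * a.factorial * l.factorial := by
    exact_mod_cast (Nat.add_choose_mul_factorial_mul_factorial a l).symm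
  have hr : ((a + r).factorial : ℚ) = (a + r).choose r * a.factorial * r.factorial := by
    exact_mod_cast (Nat.add_choose_mul_factorial_mul_factorial a r).symm
  have hchoose : ((a + r).choose r : ℚ) ≠ 0 := by exact_mod_cast (Nat.choose_pos (by omega)).ne'
  have hpow : ((l : ℚ) + 1) ^ k ≠ 0 := zpow_ne_zero k (by positivity)
  rw [hl, hr]
  field_simp

theorem eval_zero_eq_factorial_mul_coeff {ψ : ℚ⟦X⟧} {B : ℕ → Polynomial ℚ}
    (h : map (Polynomial.C : ℚ →+* Polynomial ℚ) ψ *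
        mk (fun n => ((-1 : ℚ) ^ n / n.factorial) • ascPochhammer ℚ n) =
      mk fun n => ((n.factorial : ℚ)⁻¹) • B n) (n : ℕ) :
    (B n).eval 0 = n.factorial * coeff n ψ := by
  have hψ : map (Polynomial.evalRingHom 0) (map Polynomial.C ψ) = ψ := by ext; simp
  have hone : map (Polynomial.evalRingHom 0)
      (mk fun n => ((-1 : ℚ) ^ n / n.factorial) • ascPochhammer ℚ n) = 1 := by
    ext m
    cases m <;> simp [coeff_one]
  have := congrArg (fun f => coeff n (map (Polynomial.evalRingHom 0) f)) h
  simp only [map_mul, hψ, hone, mul_one, coeff_map, coeff_mk, Polynomial.coe_evalRingHom,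
    Polynomial.eval_smul, smul_eq_mul] at this
  rw [this, mul_inv_cancel_left₀ (by positivity)]

end SubstLog

/-- for integers `r ≥ 0`, `k` and `n ≥ 0`,
`Aₙ^{(r,k)} = Aₙ^{(r,k)}(0) = Σ_{m=0}^n Σ_{l=0}^m (C(m,l)/(C(m-l+r,r)(l+1)^k))
 S₁(n,m) S₂(m-l+r,r)`. -/
theorem cauchy_stmt14
    (r : ℕ) (k : ℤ)
    (L : PowerSeries ℚ)
    (hL : ∀ n : ℕ, PowerSeries.coeff n L = if n = 0 then 0 else (-1 : ℚ) ^ (n - 1) / n)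
    (Lu : (PowerSeries ℚ)ˣ)
    (hLu : (Lu : PowerSeries ℚ) * PowerSeries.X = L)
    (G : ℤ → PowerSeries ℚ)
    (hG : ∀ (j : ℤ) (n : ℕ), PowerSeries.coeff n (G j) =
      ∑ m ∈ Finset.range (n + 1),
        ((m.factorial : ℚ) * ((m : ℚ) + 1) ^ j)⁻¹ * PowerSeries.coeff n (L ^ m))
    (A : ℤ → ℤ → ℕ → Polynomial ℚ)
    (hA : ∀ ρ κ : ℤ, PowerSeries.map (Polynomial.C : ℚ →+* Polynomial ℚ)
        (((Lu ^ (-ρ) : (PowerSeries ℚ)ˣ) : PowerSeries ℚ) * G κ) *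
        PowerSeries.mk (fun n => ((-1 : ℚ) ^ n / n.factorial) • ascPochhammer ℚ n) =
      PowerSeries.mk (fun n => ((n.factorial : ℚ)⁻¹) • A ρ κ n))
    (S1 : ℕ → ℕ → ℚ)
    (hS1 : ∀ n : ℕ, descPochhammer ℚ n =
      ∑ l ∈ Finset.range (n + 1), Polynomial.C (S1 n l) * Polynomial.X ^ l)
    (hS1zero : ∀ n l : ℕ, n < l → S1 n l = 0)
    (S2 : ℕ → ℕ → ℕ)
    (hS200 : S2 0 0 = 1)
    (hS2n0 : ∀ n : ℕ, S2 (n + 1) 0 = 0)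
    (hS20m : ∀ m : ℕ, S2 0 (m + 1) = 0)
    (hS2rec : ∀ n m : ℕ, S2 (n + 1) (m + 1) = (m + 1) * S2 n (m + 1) + S2 n m)
    :
    ∀ n : ℕ, (A (r : ℤ) k n).eval 0 =
      ∑ m ∈ Finset.range (n + 1), ∑ l ∈ Finset.range (m + 1),
        ((m.choose l : ℚ) / (((m - l + r).choose r : ℚ) * ((l : ℚ) + 1) ^ k)) *
          S1 n m * (S2 (m - l + r) r : ℚ) := by
  intro n
  obtain rfl := eq_stirlingSecond_of_rec S2 hS200 hS2n0 hS20m hS2rec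
  obtain rfl : L = PowerSeries.log ℚ := by
    ext m
    rw [hL, PowerSeries.coeff_log]
    rcases m with _ | m <;> simp [pow_succ]
  have hGk : G k = (polylogFactorial k).subst (PowerSeries.log ℚ) := by
    ext m
    rw [hG, coeff_subst_log]
    simp [polylogFactorial]
  rw [eval_zero_eq_factorial_mul_coeff (hA r k), ← subst_log_expSubOneDivXPow hLu, hGk,
    ← PowerSeries.subst_mul PowerSeries.HasSubst.log, factorial_mul_coeff_subst_log]
  refine sum_congr rfl fun m _ => ?_
  rw [factorial_mul_coeff_expSubOneDivXPow_mul_polylogFactorial, sum_mul]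
  refine sum_congr rfl fun l _ => ?_
  rw [eq_coeff_descPochhammer_of_expansion hS1 hS1zero]
  ring
end
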